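/- arXiv:2312.16801 — 10 statements merged into one kernel-verified Lean document; each statement's English description precedes it below -/
import Mathlib

section
/- Let α be the real cube root of 2. The polynomial f = p₁² + p₂² + p₃², where p₁ = (-4α²+4α-2)x₀² + x₁² - 2x₁x₂ + 2x₂x₃ - 2x₃², p₂ = (-4α²-4α+6)x₀² + x₁² + 2x₁x₂ + 2x₂x₃ + 2x₃², p₃ = 4αx₀x₁ + 4x₀x₂ + 4α²x₀x₃, has rational coefficients; explicitly, f = 40x₀⁴ + 8x₀²x₁² + 32x₀²x₁x₂ + 64x₀²x₁x₃ + 16x₀²x₂² + 16x₀²x₂x₃ + 32x₀²x₃² + 2x₁⁴ + 8x₁²x₂² + 8x₁²x₂x₃ + 16x₁x₂x₃² + 8x₂²x₃² + 8x₃⁴. -/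
/-- With α the real cube root of 2, the sum of squares
p₁² + p₂² + p₃² equals the explicit quartic with rational coefficients. -/
theorem sos_identity_over_Q_cbrt2 (α : ℝ) (hα : α ^ 3 = 2)
    (x₀ x₁ x₂ x₃ : ℝ) :
    ((-4*α^2 + 4*α - 2)*x₀^2 + x₁^2 - 2*x₁*x₂ + 2*x₂*x₃ - 2*x₃^2)^2
      + ((-4*α^2 - 4*α + 6)*x₀^2 + x₁^2 + 2*x₁*x₂ + 2*x₂*x₃ + 2*x₃^2)^2
      + (4*α*x₀*x₁ + 4*x₀*x₂ + 4*α^2*x₀*x₃)^2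
    = 40*x₀^4 + 8*x₀^2*x₁^2 + 32*x₀^2*x₁*x₂ + 64*x₀^2*x₁*x₃ + 16*x₀^2*x₂^2
      + 16*x₀^2*x₂*x₃ + 32*x₀^2*x₃^2 + 2*x₁^4 + 8*x₁^2*x₂^2 + 8*x₁^2*x₂*x₃
      + 16*x₁*x₂*x₃^2 + 8*x₂^2*x₃^2 + 8*x₃^4 := by
  linear_combination (32*α*x₀^4 + 32*x₀^2*x₁*x₃ + 16*α*x₀^2*x₃^2)*hα
end

section
/- The polynomial f = 40x₀⁴ + 8x₀²x₁² + 32x₀²x₁x₂ + 64x₀²x₁x₃ + 16x₀²x₂² + 16x₀²x₂x₃ + 32x₀²x₃² + 2x₁⁴ + 8x₁²x₂² + 8x₁²x₂x₃ + 16x₁x₂x₃² + 8x₂²x₃² + 8x₃⁴ is nonnegative on ℝ⁴ (it is a sum of squares of real polynomials). -/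
/-- The explicit rational quartic f is nonnegative on ℝ⁴. -/
theorem f_nonneg (x₀ x₁ x₂ x₃ : ℝ) :
    0 ≤ 40*x₀^4 + 8*x₀^2*x₁^2 + 32*x₀^2*x₁*x₂ + 64*x₀^2*x₁*x₃ + 16*x₀^2*x₂^2
      + 16*x₀^2*x₂*x₃ + 32*x₀^2*x₃^2 + 2*x₁^4 + 8*x₁^2*x₂^2 + 8*x₁^2*x₂*x₃
      + 16*x₁*x₂*x₃^2 + 8*x₂^2*x₃^2 + 8*x₃^4 := by
  set c : ℝ := (2:ℝ) ^ ((1:ℝ)/3) with hcdef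
  have hc : c^3 = 2 := by
    rw [hcdef, ← Real.rpow_natCast _ 3, ← Real.rpow_mul (by norm_num)]
    norm_num
  have key : 40*x₀^4 + 8*x₀^2*x₁^2 + 32*x₀^2*x₁*x₂ + 64*x₀^2*x₁*x₃ + 16*x₀^2*x₂^2
      + 16*x₀^2*x₂*x₃ + 32*x₀^2*x₃^2 + 2*x₁^4 + 8*x₁^2*x₂^2 + 8*x₁^2*x₂*x₃
      + 16*x₁*x₂*x₃^2 + 8*x₂^2*x₃^2 + 8*x₃^4
      = 2*((2-4*c^2)*x₀^2 + x₁^2 + 2*x₂*x₃)^2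
        + 8*((2-2*c)*x₀^2 + x₃^2 + x₁*x₂)^2
        + 16*(x₀*(c*x₁ + x₂ + c^2*x₃))^2 := by
    linear_combination (-16*x₀^2*x₃^2*c - 32*x₀^2*x₁*x₃ - 32*x₀^4*c) * hc
  rw [key]
  positivity
end

section
/- Let α be the real cube root of 2 and β a real root of X² + α²X + (1 - α²). Then β has degree 6 over ℚ; in particular β ∉ ℚ(α). -/
/-!
Write `d = α⁴ + 4α² - 4` for the discriminant of `X² + α²X + 1 - α²`. If `β` were in `ℚ(α)`,
then `2β + α² = x + yα + zα²` would be a square root of `d` in `ℚ(α)`; comparing coefficients in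
the basis `1, α, α²` gives three homogeneous quadratic equations, and a 2-adic descent shows that
they have no rational solution. On the other hand `α = ((β² + 1) / (1 - β))² / 2` lies in `ℚ(β)`,
so `[ℚ(β) : ℚ]` is a multiple of `3` different from `3`, and at most `6` because `β` is a root of
a monic sextic.
-/

open Polynomial IntermediateField Module

section

variable {K L : Type*} [Field K] [Field L] [Algebra K L] {α : L}

theorem natDegree_minpoly_of_pow_eq {p : ℕ} (hp : p.Prime) {a : K} (ha : ∀ b : K, b ^ p ≠ a)
    (hα : α ^ p = algebraMap K L a) : (minpoly K α).natDegree = p := by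
  rw [← minpoly.eq_of_irreducible_of_monic (X_pow_sub_C_irreducible_of_prime hp ha)
    (by simp [hα]) (monic_X_pow_sub_C a hp.ne_zero), natDegree_X_pow_sub_C]

theorem isIntegral_of_natDegree_minpoly_ne_zero (hα : (minpoly K α).natDegree ≠ 0) :
    IsIntegral K α :=
  minpoly.ne_zero_iff.mp fun h => hα (by rw [h, natDegree_zero])

theorem exists_eq_aeval_of_mem_adjoin_simple (hα : IsIntegral K α) {x : L} (hx : x ∈ K⟮α⟯) :
    ∃ f : K[X], f.natDegree < (minpoly K α).natDegree ∧ x = aeval α f := by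
  obtain ⟨f, hf, hxf⟩ := (adjoin.powerBasis hα).exists_eq_aeval ⟨x, hx⟩
  exact ⟨f, hf, by simpa using congrArg Subtype.val hxf⟩

theorem exists_eq_of_mem_adjoin_of_natDegree_minpoly_eq_three
    (hα : (minpoly K α).natDegree = 3) {x : L} (hx : x ∈ K⟮α⟯) :
    ∃ a b c : K, x = algebraMap K L a + algebraMap K L b * α + algebraMap K L c * α ^ 2 := by
  obtain ⟨f, hf, rfl⟩ := exists_eq_aeval_of_mem_adjoin_simple
    (isIntegral_of_natDegree_minpoly_ne_zero (by omega)) hx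
  refine ⟨f.coeff 0, f.coeff 1, f.coeff 2, ?_⟩
  rw [aeval_eq_sum_range' (hα ▸ hf)]
  simp [Finset.sum_range_succ, Algebra.smul_def]

theorem eq_zero_of_natDegree_minpoly_eq_three (hα : (minpoly K α).natDegree = 3) {a b c : K}
    (h : algebraMap K L a + algebraMap K L b * α + algebraMap K L c * α ^ 2 = 0) :
    a = 0 ∧ b = 0 ∧ c = 0 := by
  set f : K[X] := C a + C b * X + C c * X ^ 2
  have hf : f = 0 := by
    by_contra hf
    have hmin := minpoly.degree_le_of_ne_zero K α hf (by simpa [f] using h)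
    have hdeg : f.natDegree ≤ 2 := by simp only [f]; compute_degree
    have := natDegree_le_natDegree hmin
    omega
  refine ⟨?_, ?_, ?_⟩
  · simpa [f] using congrArg (coeff · 0) hf
  · simpa [f] using congrArg (coeff · 1) hf
  · simpa [f] using congrArg (coeff · 2) hf

theorem IntermediateField.finrank_eq_two_mul_of_lt {E F : IntermediateField K L} (hEF : E < F)
    [FiniteDimensional K F] (h : finrank K F ≤ 2 * finrank K E) :
    finrank K F = 2 * finrank K E := by
  have hF := finrank_bot_mul_relfinrank hEF.le
  have hr₁ : relfinrank E F ≠ 1 := fun h₁ => hEF.not_ge (relfinrank_eq_one_iff.mp h₁)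
  have hr₀ : relfinrank E F ≠ 0 := by
    rintro h₀
    rw [h₀, mul_zero] at hF
    exact (finrank_pos (R := K) (M := F)).ne hF
  nlinarith [show 2 ≤ relfinrank E F by omega]

end

/-- Coefficientwise form of `(A + Bα + Cα²)² = N² (α⁴ + 4α² - 4)` when `α³ = 2`. -/
def IsSqrtDisc {R : Type*} [CommRing R] (A B C N : R) : Prop :=
  A ^ 2 + 4 * B * C = -4 * N ^ 2 ∧ A * B + C ^ 2 = N ^ 2 ∧ B ^ 2 + 2 * A * C = 4 * N ^ 2

namespace IsSqrtDisc

theorem mul {R : Type*} [CommRing R] {A B C N : R} (h : IsSqrtDisc A B C N) (t : R) :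
    IsSqrtDisc (t * A) (t * B) (t * C) (t * N) := by
  obtain ⟨h₁, h₂, h₃⟩ := h
  exact ⟨by linear_combination t ^ 2 * h₁, by linear_combination t ^ 2 * h₂,
    by linear_combination t ^ 2 * h₃⟩

theorem of_two_mul {A B C N : ℤ} (h : IsSqrtDisc (2 * A) (2 * B) (2 * C) (2 * N)) :
    IsSqrtDisc A B C N := by
  obtain ⟨h₁, h₂, h₃⟩ := h
  exact ⟨by linarith, by linarith, by linarith⟩

theorem intCast_iff {A B C N : ℤ} : IsSqrtDisc (A : ℚ) B C N ↔ IsSqrtDisc A B C N := by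
  simp only [IsSqrtDisc]
  norm_cast

theorem two_dvd {A B C N : ℤ} (h : IsSqrtDisc A B C N) : 2 ∣ A ∧ 2 ∣ B ∧ 2 ∣ C ∧ 2 ∣ N := by
  obtain ⟨h₁, h₂, h₃⟩ := h
  obtain ⟨a, rfl⟩ : 2 ∣ A :=
    Int.prime_two.dvd_of_dvd_pow (n := 2) ⟨-2 * N ^ 2 - 2 * B * C, by linarith⟩
  obtain ⟨b, rfl⟩ : 2 ∣ B :=
    Int.prime_two.dvd_of_dvd_pow (n := 2) ⟨2 * N ^ 2 - 2 * a * C, by linarith⟩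
  obtain ⟨n, rfl⟩ : 2 ∣ N := by
    have mod_four : ∀ a b c n : ZMod 4, b ^ 2 + a * c = n ^ 2 → a ^ 2 + 2 * b * c = -n ^ 2 →
        2 * n = 0 := by decide
    have e₂ := congrArg (Int.cast : ℤ → ZMod 4) (by linarith : b ^ 2 + a * C = N ^ 2)
    have e₃ := congrArg (Int.cast : ℤ → ZMod 4) (by linarith : a ^ 2 + 2 * b * C = -N ^ 2)
    push_cast at e₂ e₃
    have : (4 : ℤ) ∣ 2 * N :=
      (ZMod.intCast_zmod_eq_zero_iff_dvd _ 4).mp (by exact_mod_cast mod_four _ _ _ _ e₂ e₃)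
    omega
  refine ⟨dvd_mul_right 2 a, dvd_mul_right 2 b, ?_, dvd_mul_right 2 n⟩
  exact Int.prime_two.dvd_of_dvd_pow (n := 2) ⟨2 * n ^ 2 - 2 * a * b, by linarith⟩

theorem eq_zero {A B C N : ℤ} (h : IsSqrtDisc A B C N) : N = 0 := by
  induction hN : N.natAbs using Nat.strong_induction_on generalizing A B C N with
  | _ n ih =>
    obtain ⟨⟨A, rfl⟩, ⟨B, rfl⟩, ⟨C, rfl⟩, ⟨N, rfl⟩⟩ := h.two_dvd
    rcases eq_or_ne N 0 with hN0 | hN0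
    · simp [hN0]
    · exact absurd (ih N.natAbs (by omega) h.of_two_mul rfl) hN0

theorem not_rat (x y z : ℚ) : ¬ IsSqrtDisc x y z 1 := by
  intro h
  set D : ℤ := x.den * y.den * z.den
  have hD : D ≠ 0 := by positivity
  obtain ⟨A, hA⟩ : ∃ A : ℤ, (A : ℚ) = D * x :=
    ⟨x.num * y.den * z.den, by push_cast [D]; rw [← Rat.mul_den_eq_num]; ring⟩
  obtain ⟨B, hB⟩ : ∃ B : ℤ, (B : ℚ) = D * y :=
    ⟨y.num * x.den * z.den, by push_cast [D]; rw [← Rat.mul_den_eq_num]; ring⟩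
  obtain ⟨C, hC⟩ : ∃ C : ℤ, (C : ℚ) = D * z :=
    ⟨z.num * x.den * y.den, by push_cast [D]; rw [← Rat.mul_den_eq_num]; ring⟩
  have hscaled := h.mul (D : ℚ)
  rw [← hA, ← hB, ← hC, mul_one, intCast_iff] at hscaled
  exact hD hscaled.eq_zero

end IsSqrtDisc

theorem rat_pow_three_ne_two (b : ℚ) : b ^ 3 ≠ 2 := by
  intro hb
  have h : b.num ^ 3 = 2 := by simpa using congrArg Rat.num hb
  rcases le_or_gt b.num 1 with h1 | h1 <;> nlinarith [sq_nonneg b.num, sq_nonneg (b.num + 1)]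

/-- Obtained by eliminating `α` between `α² (1 - β) = β² + 1` and `α⁶ = 4`. -/
noncomputable def sextic : ℚ[X] := (X ^ 2 + 1) ^ 3 - C 4 * (1 - X) ^ 3

theorem sextic_monic : sextic.Monic := by
  unfold sextic
  monicity!

theorem sextic_natDegree : sextic.natDegree = 6 := by
  unfold sextic
  compute_degree!

section

variable {L : Type*} [Field L] [CharZero L] {α β : L}

theorem natDegree_minpoly_of_pow_three_eq_two (hα : α ^ 3 = 2) :
    (minpoly ℚ α).natDegree = 3 :=
  natDegree_minpoly_of_pow_eq Nat.prime_three rat_pow_three_ne_two (by simp [hα])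

theorem aeval_sextic (hα : α ^ 3 = 2) (hβ : β ^ 2 + α ^ 2 * β + (1 - α ^ 2) = 0) :
    aeval β sextic = 0 := by
  simp only [sextic, map_sub, map_pow, map_add, map_mul, aeval_X, map_one, aeval_C, eq_ratCast]
  push_cast
  linear_combination ((β ^ 2 + 1) ^ 2 + (β ^ 2 + 1) * (α ^ 2 * (1 - β)) + (α ^ 2 * (1 - β)) ^ 2)
    * hβ + (1 - β) ^ 3 * (α ^ 3 + 2) * hα

theorem alpha_mem_adjoin_beta (hα : α ^ 3 = 2)
    (hβ : β ^ 2 + α ^ 2 * β + (1 - α ^ 2) = 0) : α ∈ ℚ⟮β⟯ := by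
  have hβ1 : 1 - β ≠ 0 := by
    intro h
    rw [← sub_eq_zero.mp h] at hβ
    norm_num at hβ
  have hαβ : α = ((β ^ 2 + 1) / (1 - β)) ^ 2 / 2 := by
    field_simp
    linear_combination (-(2 * α ^ 2 * (1 - β)) - (β ^ 2 + α ^ 2 * β + (1 - α ^ 2))) * hβ
      - α * (1 - β) ^ 2 * hα
  have hb := mem_adjoin_simple_self ℚ β
  have h1 : (1 : L) ∈ ℚ⟮β⟯ := one_mem _
  rw [hαβ]
  exact div_mem (pow_mem (div_mem (add_mem (pow_mem hb 2) h1) (sub_mem h1 hb)) 2) (ofNat_mem _ 2)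

theorem beta_notMem_adjoin_alpha (hα : α ^ 3 = 2)
    (hβ : β ^ 2 + α ^ 2 * β + (1 - α ^ 2) = 0) : β ∉ ℚ⟮α⟯ := by
  intro hβα
  have hdeg := natDegree_minpoly_of_pow_three_eq_two hα
  have hα' := mem_adjoin_simple_self ℚ α
  obtain ⟨x, y, z, hxyz⟩ := exists_eq_of_mem_adjoin_of_natDegree_minpoly_eq_three hdeg
    (add_mem (mul_mem (ofNat_mem _ 2) hβα) (pow_mem hα' 2))
  -- the coefficients of `(x + yα + zα²)² - (4α² + 2α - 4)`, reduced by `α³ = 2`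
  obtain ⟨h₁, h₂, h₃⟩ := eq_zero_of_natDegree_minpoly_eq_three hdeg
    (a := x ^ 2 + 4 * y * z + 4) (b := 2 * x * y + 2 * z ^ 2 - 2)
    (c := y ^ 2 + 2 * x * z - 4) (by
      simp only [eq_ratCast] at hxyz ⊢
      push_cast
      linear_combination (-(x + y * α + z * α ^ 2) - (2 * β + α ^ 2)) * hxyz + 4 * hβ
        + (α - 2 * y * z - z ^ 2 * α) * hα)
  exact IsSqrtDisc.not_rat x y z ⟨by linarith, by linarith, by linarith⟩

end

/-- β (a real root of X² + α²X + (1-α²), α = ∛2) has degree 6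
over ℚ; in particular β ∉ ℚ(α). -/
theorem beta_degree_six (α β : ℝ) (hα : α ^ 3 = 2)
    (hβ : β ^ 2 + α ^ 2 * β + (1 - α ^ 2) = 0) :
    (minpoly ℚ β).natDegree = 6 ∧
      β ∉ IntermediateField.adjoin ℚ ({α} : Set ℝ) := by
  have hβα : β ∉ ℚ⟮α⟯ := beta_notMem_adjoin_alpha hα hβ
  have hαβ : ℚ⟮α⟯ < ℚ⟮β⟯ :=
    lt_of_le_of_ne (adjoin_simple_le_iff.mpr (alpha_mem_adjoin_beta hα hβ))
      fun h => hβα (h ▸ mem_adjoin_simple_self ℚ β)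
  have hβint : IsIntegral ℚ β := ⟨sextic, sextic_monic, aeval_sextic hα hβ⟩
  have hα3 := natDegree_minpoly_of_pow_three_eq_two hα
  have hβ6 : (minpoly ℚ β).natDegree ≤ 6 :=
    sextic_natDegree ▸ natDegree_le_natDegree (minpoly.min ℚ β sextic_monic (aeval_sextic hα hβ))
  have : FiniteDimensional ℚ ℚ⟮β⟯ := adjoin.finiteDimensional hβint
  have hfin := finrank_eq_two_mul_of_lt hαβ
  rw [adjoin.finrank hβint, adjoin.finrank (isIntegral_of_natDegree_minpoly_ne_zero (by omega)),
    hα3] at hfin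
  exact ⟨hfin (by omega), hβα⟩
end

section
/- Let α be the real cube root of 2 and β a real root of X² + α²X + (1 - α²). If c₁, c₂ ∈ ℚ are not both zero, then c₁(-αβ) + c₂(α + β) ∉ ℚ. -/
/-- If c₁, c₂ ∈ ℚ are not both zero then c₁(-αβ) + c₂(α+β) is
irrational. -/
theorem combination_not_rational (α β : ℝ) (hα : α ^ 3 = 2)
    (hβ : β ^ 2 + α ^ 2 * β + (1 - α ^ 2) = 0)
    (hβα : β ∉ IntermediateField.adjoin ℚ ({α} : Set ℝ))
    (c₁ c₂ : ℚ) (hc : ¬(c₁ = 0 ∧ c₂ = 0)) :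
    (c₁ : ℝ) * (-(α * β)) + (c₂ : ℝ) * (α + β) ∉ Set.range ((↑) : ℚ → ℝ) := by
  rintro ⟨q, hq⟩
  have hαirr : Irrational α := by
    apply irrational_nrt_of_notint_nrt 3 2 (by exact_mod_cast hα) _ (by norm_num)
    rintro ⟨y, hy⟩
    have h1 : (1:ℝ) < α := by nlinarith [sq_nonneg (2*α+1), sq_nonneg (α-1)]
    have h2 : α < 2 := by nlinarith [sq_nonneg (2*α+1), sq_nonneg (α-1), sq_nonneg (α+1)]
    rw [hy] at h1 h2
    have hy1 : (1:ℤ) < y := by exact_mod_cast h1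
    have hy2 : y < 2 := by exact_mod_cast h2
    omega
  have hne : (c₂ : ℝ) - c₁ * α ≠ 0 := by
    intro h
    by_cases hc1 : c₁ = 0
    · apply hc
      refine ⟨hc1, ?_⟩
      rw [hc1] at h
      push_cast at h
      have h2 : (c₂:ℝ) = 0 := by linarith
      exact_mod_cast h2
    · have hc1' : (c₁:ℝ) ≠ 0 := by exact_mod_cast hc1
      apply hαirr
      refine ⟨c₂ / c₁, ?_⟩
      push_cast
      field_simp
      linarith
  have hβeq : β = ((q:ℝ) - c₂ * α) / ((c₂:ℝ) - c₁ * α) := by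
    rw [eq_div_iff hne]
    ring_nf
    ring_nf at hq
    linarith
  apply hβα
  rw [hβeq]
  have hαmem : α ∈ IntermediateField.adjoin ℚ ({α} : Set ℝ) :=
    IntermediateField.mem_adjoin_simple_self ℚ α
  have hrat : ∀ r : ℚ, (r:ℝ) ∈ IntermediateField.adjoin ℚ ({α} : Set ℝ) := fun r =>
    by exact_mod_cast (IntermediateField.adjoin ℚ ({α} : Set ℝ)).algebraMap_mem r
  exact div_mem (sub_mem (hrat q) (mul_mem (hrat c₂) hαmem))
    (sub_mem (hrat c₂) (mul_mem (hrat c₁) hαmem))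
end

section
/- Let α = ∛2 and β a real root of X² + α²X + (1 - α²). Consider the six vectors u₁,…,u₆ ∈ ℝ¹⁰ given by u₁ = (0,0,1,-αβ,0,0,0,0,0,0), u₂ = (0,1,0,α+β,0,0,0,0,0,0), u₃ = (-α+2,0,0,0,(α-4)/(4α²-2),0,0,0,0,1), u₄ = (-2α²+1,0,0,0,1/2,0,0,0,1,0), u₅ = (α²+2α+2β+2,0,0,0,(α²-4α)/(4α²-2),0,1,0,0,0), u₆ = (-α+2,0,0,0,(-α+4)/(4α²-2),1,0,0,0,0). Then the real span W = ⟨u₁,…,u₆⟩_ℝ satisfies W ∩ ℚ¹⁰ = {0}. -/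
/-!
Write `v = ∑ cᵢ uᵢ`. The coordinates 2, 1, 9, 8, 6, 5 of `v` (indexed from 0) are `c₁, …, c₆`,
so the `cᵢ` are rational. Each remaining coordinate has the form `x + y β` with `x, y ∈ ℚ(α)`;
being rational, it forces `y = 0` because `β ∉ ℚ(α)`, and then the ℚ-linear independence of
`1, α, α²` (the minimal polynomial of `α` is `X³ - 2`) forces linear relations between the `cᵢ`.
Coordinate 3 gives `c₁ = c₂ = 0`, coordinate 0 gives `c₄ = c₅ = 0` and `c₆ = -c₃`, and
coordinate 4 then gives `c₃ = 0`.
-/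

open Polynomial IntermediateField

theorem eq_zero_of_mul_mem_of_notMem {K S : Type*} [Field K] [SetLike S K] [SubfieldClass S K]
    {s : S} {β y : K} (hβ : β ∉ s) (hy : y ∈ s) (hyβ : y * β ∈ s) : y = 0 := by
  by_contra hy0
  exact hβ (by simpa [hy0] using mul_mem (inv_mem hy) hyβ)

theorem irrational_of_pow_three_eq_two {x : ℝ} (hx : x ^ 3 = 2) : Irrational x :=
  irrational_nrt_of_n_not_dvd_multiplicity 3 two_ne_zero 2 (by exact_mod_cast hx)
    (by norm_num [multiplicity_self])

theorem minpoly_eq_X_pow_three_sub_two {α : ℝ} (hα : α ^ 3 = 2) :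
    minpoly ℚ α = X ^ 3 - C 2 := by
  have hirr : Irreducible (X ^ 3 - C (2 : ℚ)) := by
    refine X_pow_sub_C_irreducible_of_prime Nat.prime_three fun b hb => ?_
    exact irrational_of_pow_three_eq_two (x := b) (by exact_mod_cast hb) |>.ne_rat b rfl
  exact (minpoly.eq_of_irreducible_of_monic hirr (by simp [hα])
    (monic_X_pow_sub_C _ three_ne_zero)).symm

theorem eq_zero_of_add_mul_add_mul_sq_eq_zero {α : ℝ} (hα : α ^ 3 = 2) {a b c : ℚ}
    (h : a + b * α + c * α ^ 2 = 0) : a = 0 ∧ b = 0 ∧ c = 0 := by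
  set p : ℚ[X] := C c * X ^ 2 + C b * X + C a
  have hp : p = 0 := by
    by_contra hp
    have hdeg := minpoly.degree_le_of_ne_zero ℚ α hp (by simp [p]; linear_combination h)
    rw [minpoly_eq_X_pow_three_sub_two hα, degree_X_pow_sub_C three_pos] at hdeg
    exact absurd (hdeg.trans degree_quadratic_le) (by decide)
  refine ⟨?_, ?_, ?_⟩
  · simpa [p] using congrArg (coeff · 0) hp
  · simpa [p] using congrArg (coeff · 1) hp
  · simpa [p] using congrArg (coeff · 2) hp

theorem four_mul_sq_sub_two_ne_zero {α : ℝ} (hα : α ^ 3 = 2) : 4 * α ^ 2 - 2 ≠ 0 := fun h => by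
  simpa using (eq_zero_of_add_mul_add_mul_sq_eq_zero hα (a := -2) (b := 0) (c := 4)
    (by push_cast; linear_combination h)).2.2

theorem add_mul_add_mul_sq_mem_adjoin (α : ℝ) (a b c : ℚ) :
    (a + b * α + c * α ^ 2 : ℝ) ∈ ℚ⟮α⟯ := by
  have hα := mem_adjoin_simple_self ℚ α
  have hr (r : ℚ) : (r : ℝ) ∈ ℚ⟮α⟯ := SubfieldClass.ratCast_mem _ r
  exact add_mem (add_mem (hr a) (mul_mem (hr b) hα)) (mul_mem (hr c) (pow_mem hα 2))

theorem coeffs_eq_zero_of_eq_ratCast {α β : ℝ} (hα : α ^ 3 = 2) (hβ : β ∉ ℚ⟮α⟯)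
    {a b c d e f q : ℚ} (h : a + b * α + c * α ^ 2 + (d + e * α + f * α ^ 2) * β = q) :
    b = 0 ∧ c = 0 ∧ d = 0 ∧ e = 0 ∧ f = 0 := by
  have hy : (d + e * α + f * α ^ 2 : ℝ) = 0 := by
    refine eq_zero_of_mul_mem_of_notMem hβ (add_mul_add_mul_sq_mem_adjoin α d e f) ?_
    have := add_mul_add_mul_sq_mem_adjoin α (q - a) (-b) (-c)
    convert this using 1
    push_cast
    linear_combination h
  obtain ⟨-, hb, hc⟩ := eq_zero_of_add_mul_add_mul_sq_eq_zero hα (a := a - q) (b := b) (c := c)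
    (by push_cast; linear_combination h - β * hy)
  exact ⟨hb, hc, eq_zero_of_add_mul_add_mul_sq_eq_zero hα hy⟩

theorem kernel_coeffs_eq_zero {α β : ℝ} (hα : α ^ 3 = 2) (hβ : β ∉ ℚ⟮α⟯)
    (c₁ c₂ c₃ c₄ c₅ c₆ r₀ r₃ r₄ : ℚ)
    (h₃ : c₂ * (α + β) - c₁ * α * β = r₃)
    (h₀ : c₃ * (2 - α) + c₄ * (1 - 2 * α ^ 2) + c₅ * (α ^ 2 + 2 * α + 2 * β + 2)
      + c₆ * (2 - α) = r₀)
    (h₄ : (c₃ * (α - 4) + c₅ * (α ^ 2 - 4 * α) + c₆ * (4 - α)) / (4 * α ^ 2 - 2) + c₄ / 2 = r₄) :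
    c₁ = 0 ∧ c₂ = 0 ∧ c₃ = 0 ∧ c₄ = 0 ∧ c₅ = 0 ∧ c₆ = 0 := by
  obtain ⟨-, -, hc₂, hc₁, -⟩ := coeffs_eq_zero_of_eq_ratCast hα hβ
    (a := 0) (b := c₂) (c := 0) (d := c₂) (e := -c₁) (f := 0) (q := r₃)
    (by push_cast; linear_combination h₃)
  obtain ⟨hc₃₆, hc₄₅, hc₅, -⟩ := coeffs_eq_zero_of_eq_ratCast hα hβ
    (a := 2 * c₃ + c₄ + 2 * c₅ + 2 * c₆) (b := -c₃ + 2 * c₅ - c₆) (c := -2 * c₄ + c₅)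
    (d := 2 * c₅) (e := 0) (f := 0) (q := r₀)
    (by push_cast; linear_combination h₀)
  have hc₆ : c₆ = -c₃ := by linarith
  have hc₄ : c₄ = 0 := by linarith
  have h₄' : (r₄ : ℝ) = 2 * c₃ * (α - 4) / (4 * α ^ 2 - 2) := by
    rw [← h₄, hc₆, hc₄, show c₅ = 0 by linarith]
    push_cast
    ring
  rw [eq_div_iff (four_mul_sq_sub_two_ne_zero hα)] at h₄'
  obtain ⟨-, hc₃, -⟩ := eq_zero_of_add_mul_add_mul_sq_eq_zero hα
    (a := 2 * r₄ - 8 * c₃) (b := 2 * c₃) (c := -4 * r₄)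
    (by push_cast; linear_combination -h₄')
  refine ⟨neg_eq_zero.mp hc₁, hc₂, ?_, hc₄, ?_, ?_⟩ <;> linarith

theorem span_kernel_no_rational_vectors_general (α β : ℝ) (hα : α ^ 3 = 2)
    (hβα : β ∉ IntermediateField.adjoin ℚ ({α} : Set ℝ)) :
    ∀ v ∈ Submodule.span ℝ
      ({![0, 0, 1, -(α*β), 0, 0, 0, 0, 0, 0],
        ![0, 1, 0, α + β, 0, 0, 0, 0, 0, 0],
        ![-α + 2, 0, 0, 0, (α - 4)/(4*α^2 - 2), 0, 0, 0, 0, 1],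
        ![-2*α^2 + 1, 0, 0, 0, 1/2, 0, 0, 0, 1, 0],
        ![α^2 + 2*α + 2*β + 2, 0, 0, 0, (α^2 - 4*α)/(4*α^2 - 2), 0, 1, 0, 0, 0],
        ![-α + 2, 0, 0, 0, (-α + 4)/(4*α^2 - 2), 1, 0, 0, 0, 0]} :
        Set (Fin 10 → ℝ)),
      (∀ i : Fin 10, ∃ q : ℚ, v i = (q : ℝ)) → v = 0 := by
  intro v hv hv_rat
  simp only [Submodule.mem_span_insert, Submodule.mem_span_singleton] at hv
  obtain ⟨c₁, _, ⟨c₂, _, ⟨c₃, _, ⟨c₄, _, ⟨c₅, _, ⟨c₆, rfl⟩, rfl⟩, rfl⟩, rfl⟩, rfl⟩, rfl⟩ := hv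
  choose q hq using hv_rat
  simp only [Matrix.smul_cons, smul_eq_mul, mul_zero, mul_one, mul_neg, Matrix.smul_empty,
    neg_mul, one_div, Matrix.add_cons, Matrix.head_cons, Matrix.tail_cons, add_zero, zero_add,
    Matrix.empty_add_empty, Pi.add_apply, Fin.forall_fin_succ, Matrix.cons_val_zero,
    Matrix.cons_val_succ, Fin.succ_zero_eq_one, Fin.succ_one_eq_two, Fin.reduceSucc,
    Matrix.cons_val_fin_one, IsEmpty.forall_iff, and_true] at hq
  obtain ⟨h₀, rfl, rfl, h₃, h₄, rfl, rfl, -, rfl, rfl⟩ := hq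
  obtain ⟨hc₁, hc₂, hc₃, hc₄, hc₅, hc₆⟩ := kernel_coeffs_eq_zero hα hβα
    (q 2) (q 1) (q 9) (q 8) (q 6) (q 5) (q 0) (q 3) (q 4)
    (by linear_combination h₃) (by linear_combination h₀) (by linear_combination h₄)
  simp [hc₁, hc₂, hc₃, hc₄, hc₅, hc₆]

/-- The real span of the six kernel vectors u₁,…,u₆ ∈ ℝ¹⁰ meets
the rational points only in 0. -/
theorem span_kernel_no_rational_vectors (α β : ℝ) (hα : α ^ 3 = 2)
    (hβ : β ^ 2 + α ^ 2 * β + (1 - α ^ 2) = 0)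
    (hβα : β ∉ IntermediateField.adjoin ℚ ({α} : Set ℝ)) :
    ∀ v ∈ Submodule.span ℝ
      ({![0, 0, 1, -(α*β), 0, 0, 0, 0, 0, 0],
        ![0, 1, 0, α + β, 0, 0, 0, 0, 0, 0],
        ![-α + 2, 0, 0, 0, (α - 4)/(4*α^2 - 2), 0, 0, 0, 0, 1],
        ![-2*α^2 + 1, 0, 0, 0, 1/2, 0, 0, 0, 1, 0],
        ![α^2 + 2*α + 2*β + 2, 0, 0, 0, (α^2 - 4*α)/(4*α^2 - 2), 0, 1, 0, 0, 0],
        ![-α + 2, 0, 0, 0, (-α + 4)/(4*α^2 - 2), 1, 0, 0, 0, 0]} :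
        Set (Fin 10 → ℝ)),
      (∀ i : Fin 10, ∃ q : ℚ, v i = (q : ℝ)) → v = 0 :=
  span_kernel_no_rational_vectors_general α β hα hβα
end

section
/- The polynomial g = (y₀²-y₃²)² + (y₁²-y₃²)² + (y₂²-y₃²)² + (-y₀²-y₀y₁-y₀y₂+y₀y₃-y₁y₂+y₁y₃+y₂y₃)² vanishes at a real point (a₀,a₁,a₂,a₃) if and only if a₀ = a₁ = a₂ = a₃ = 0. -/
set_option maxHeartbeats 1000000


/-- g = q₁² + q₂² + q₃² + q₄² vanishes at a real point iff the
point is the origin. -/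
theorem g_vanishes_iff_zero (a₀ a₁ a₂ a₃ : ℝ) :
    (a₀^2 - a₃^2)^2 + (a₁^2 - a₃^2)^2 + (a₂^2 - a₃^2)^2
      + (-a₀^2 - a₀*a₁ - a₀*a₂ + a₀*a₃ - a₁*a₂ + a₁*a₃ + a₂*a₃)^2 = 0
    ↔ (a₀ = 0 ∧ a₁ = 0 ∧ a₂ = 0 ∧ a₃ = 0) := by
  constructor
  · intro h
    have h1 : a₀^2 - a₃^2 = 0 := by
      nlinarith [sq_nonneg (a₀^2 - a₃^2), sq_nonneg (a₁^2 - a₃^2),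
        sq_nonneg (a₂^2 - a₃^2),
        sq_nonneg (-a₀^2 - a₀*a₁ - a₀*a₂ + a₀*a₃ - a₁*a₂ + a₁*a₃ + a₂*a₃)]
    have h2 : a₁^2 - a₃^2 = 0 := by
      nlinarith [sq_nonneg (a₀^2 - a₃^2), sq_nonneg (a₁^2 - a₃^2),
        sq_nonneg (a₂^2 - a₃^2),
        sq_nonneg (-a₀^2 - a₀*a₁ - a₀*a₂ + a₀*a₃ - a₁*a₂ + a₁*a₃ + a₂*a₃)]
    have h3 : a₂^2 - a₃^2 = 0 := by
      nlinarith [sq_nonneg (a₀^2 - a₃^2), sq_nonneg (a₁^2 - a₃^2),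
        sq_nonneg (a₂^2 - a₃^2),
        sq_nonneg (-a₀^2 - a₀*a₁ - a₀*a₂ + a₀*a₃ - a₁*a₂ + a₁*a₃ + a₂*a₃)]
    have h4 : -a₀^2 - a₀*a₁ - a₀*a₂ + a₀*a₃ - a₁*a₂ + a₁*a₃ + a₂*a₃ = 0 := by
      nlinarith [sq_nonneg (a₀^2 - a₃^2), sq_nonneg (a₁^2 - a₃^2),
        sq_nonneg (a₂^2 - a₃^2),
        sq_nonneg (-a₀^2 - a₀*a₁ - a₀*a₂ + a₀*a₃ - a₁*a₂ + a₁*a₃ + a₂*a₃)]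
    have e1 : (a₀ - a₃) * (a₀ + a₃) = 0 := by ring_nf; linarith [h1]
    have e2 : (a₁ - a₃) * (a₁ + a₃) = 0 := by ring_nf; linarith [h2]
    have e3 : (a₂ - a₃) * (a₂ + a₃) = 0 := by ring_nf; linarith [h3]
    clear h h1 h2 h3
    rcases mul_eq_zero.mp e1 with c1 | c1 <;>
    rcases mul_eq_zero.mp e2 with c2 | c2 <;>
    rcases mul_eq_zero.mp e3 with c3 | c3 <;>
    [ (replace c1 : a₀ = a₃ := by linarith);
      (replace c1 : a₀ = a₃ := by linarith);
      (replace c1 : a₀ = a₃ := by linarith);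
      (replace c1 : a₀ = a₃ := by linarith);
      (replace c1 : a₀ = -a₃ := by linarith);
      (replace c1 : a₀ = -a₃ := by linarith);
      (replace c1 : a₀ = -a₃ := by linarith);
      (replace c1 : a₀ = -a₃ := by linarith)] <;>
    [ (replace c2 : a₁ = a₃ := by linarith);
      (replace c2 : a₁ = a₃ := by linarith);
      (replace c2 : a₁ = -a₃ := by linarith);
      (replace c2 : a₁ = -a₃ := by linarith);
      (replace c2 : a₁ = a₃ := by linarith);
      (replace c2 : a₁ = a₃ := by linarith);
      (replace c2 : a₁ = -a₃ := by linarith);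
      (replace c2 : a₁ = -a₃ := by linarith)] <;>
    [ (replace c3 : a₂ = a₃ := by linarith);
      (replace c3 : a₂ = -a₃ := by linarith);
      (replace c3 : a₂ = a₃ := by linarith);
      (replace c3 : a₂ = -a₃ := by linarith);
      (replace c3 : a₂ = a₃ := by linarith);
      (replace c3 : a₂ = -a₃ := by linarith);
      (replace c3 : a₂ = a₃ := by linarith);
      (replace c3 : a₂ = -a₃ := by linarith)] <;>
    rw [c1, c2, c3] at h4 <;>
    · clear e1 e2 e3
      have h0 : a₃ = 0 := by nlinarith [sq_nonneg a₃, h4]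
      exact ⟨by simp [c1, h0], by simp [c2, h0], by simp [c3, h0], h0⟩
  · rintro ⟨rfl, rfl, rfl, rfl⟩
    ring
end

section
/- If real numbers a₀,a₁,a₂,a₃ satisfy a₀² = a₃², a₁² = a₃², a₂² = a₃², and a₀² + a₀a₁ + a₀a₂ - a₀a₃ + a₁a₂ - a₁a₃ - a₂a₃ = 0, then a₀ = a₁ = a₂ = a₃ = 0. -/
/-- The quadrics q₁, q₂, q₃, q₄ have no common real zero other
than the origin. -/
theorem quadrics_common_zero_trivial (a₀ a₁ a₂ a₃ : ℝ)
    (h1 : a₀^2 = a₃^2) (h2 : a₁^2 = a₃^2) (h3 : a₂^2 = a₃^2)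
    (h4 : a₀^2 + a₀*a₁ + a₀*a₂ - a₀*a₃ + a₁*a₂ - a₁*a₃ - a₂*a₃ = 0) :
    a₀ = 0 ∧ a₁ = 0 ∧ a₂ = 0 ∧ a₃ = 0 := by
  have e1 : a₀ = a₃ ∨ a₀ = -a₃ := sq_eq_sq_iff_eq_or_eq_neg.mp h1
  have e2 : a₁ = a₃ ∨ a₁ = -a₃ := sq_eq_sq_iff_eq_or_eq_neg.mp h2
  have e3 : a₂ = a₃ ∨ a₂ = -a₃ := sq_eq_sq_iff_eq_or_eq_neg.mp h3
  have ht : a₃ = 0 := by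
    rcases e1 with h | h <;> rcases e2 with h' | h' <;> rcases e3 with h'' | h'' <;>
      rw [h, h', h''] at h4 <;> nlinarith [sq_nonneg a₃]
  rw [ht] at e1 e2 e3
  simp only [neg_zero, or_self] at e1 e2 e3
  exact ⟨e1, e2, e3, ht⟩
end

section
/- The polynomial h(x₀,x₁,x₂,x₃,y₀,y₁,y₂,y₃) = f(x₀,x₁,x₂,x₃) + g(y₀,y₁,y₂,y₃) + (x₂² - y₂²)² is strictly positive on ℝ⁸ ∖ {0}, where f is the rational quartic of Section 3.1 and g = q₁²+q₂²+q₃²+q₄² is the Blekherman-type quartic of Section 3.2. -/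
set_option maxHeartbeats 1000000 in
/-- h = f(x) + g(y) + (x₂² - y₂²)² is strictly positive on
ℝ⁸ ∖ {0}. -/
theorem h_strictly_positive (x₀ x₁ x₂ x₃ y₀ y₁ y₂ y₃ : ℝ)
    (h : ¬(x₀ = 0 ∧ x₁ = 0 ∧ x₂ = 0 ∧ x₃ = 0 ∧
           y₀ = 0 ∧ y₁ = 0 ∧ y₂ = 0 ∧ y₃ = 0)) :
    0 < (40*x₀^4 + 8*x₀^2*x₁^2 + 32*x₀^2*x₁*x₂ + 64*x₀^2*x₁*x₃ + 16*x₀^2*x₂^2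
          + 16*x₀^2*x₂*x₃ + 32*x₀^2*x₃^2 + 2*x₁^4 + 8*x₁^2*x₂^2 + 8*x₁^2*x₂*x₃
          + 16*x₁*x₂*x₃^2 + 8*x₂^2*x₃^2 + 8*x₃^4)
        + ((y₀^2 - y₃^2)^2 + (y₁^2 - y₃^2)^2 + (y₂^2 - y₃^2)^2
          + (-y₀^2 - y₀*y₁ - y₀*y₂ + y₀*y₃ - y₁*y₂ + y₁*y₃ + y₂*y₃)^2)
        + (x₂^2 - y₂^2)^2 := by
  -- the cube root of 2
  obtain ⟨c, hc1, hc⟩ : ∃ c : ℝ, 1 < c ∧ c ^ 3 = 2 := by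
    refine ⟨(2:ℝ) ^ ((3:ℝ)⁻¹), ?_, ?_⟩
    · exact (Real.one_lt_rpow_iff_of_pos (by norm_num)).mpr
        (Or.inl ⟨by norm_num, by norm_num⟩)
    · rw [← Real.rpow_natCast ((2:ℝ) ^ ((3:ℝ)⁻¹)) 3,
          ← Real.rpow_mul (by norm_num : (0:ℝ) ≤ 2)]
      norm_num
  have hcpos : 0 < c := by linarith
  -- SOS decomposition of f over ℚ(c)
  have hf : (40*x₀^4 + 8*x₀^2*x₁^2 + 32*x₀^2*x₁*x₂ + 64*x₀^2*x₁*x₃ + 16*x₀^2*x₂^2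
          + 16*x₀^2*x₂*x₃ + 32*x₀^2*x₃^2 + 2*x₁^4 + 8*x₁^2*x₂^2 + 8*x₁^2*x₂*x₃
          + 16*x₁*x₂*x₃^2 + 8*x₂^2*x₃^2 + 8*x₃^4)
      = 2*(x₁^2 + 2*x₂*x₃ + (2 - 4*c^2)*x₀^2)^2
        + 8*(x₁*x₂ + x₃^2 + (2 - 2*c)*x₀^2)^2
        + 16*(x₀*(c*x₁ + x₂ + c^2*x₃))^2 := by
    linear_combination (-32*x₀^4*c - 32*x₀^2*x₁*x₃ - 16*x₀^2*x₃^2*c) * hc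
  by_cases hy : y₀ = 0 ∧ y₁ = 0 ∧ y₂ = 0 ∧ y₃ = 0
  · -- all y are zero: need f + x₂⁴ > 0
    obtain ⟨e0, e1, e2, e3⟩ := hy
    subst e0; subst e1; subst e2; subst e3
    by_contra hle
    rw [not_lt] at hle
    have hS1sq : (x₁^2 + 2*x₂*x₃ + (2 - 4*c^2)*x₀^2)^2 ≤ 0 := by
      linarith [hle, hf, sq_nonneg (x₁*x₂ + x₃^2 + (2 - 2*c)*x₀^2),
        sq_nonneg (x₀*(c*x₁ + x₂ + c^2*x₃)), sq_nonneg (x₂^2)]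
    have hS2sq : (x₁*x₂ + x₃^2 + (2 - 2*c)*x₀^2)^2 ≤ 0 := by
      linarith [hle, hf, sq_nonneg (x₁^2 + 2*x₂*x₃ + (2 - 4*c^2)*x₀^2),
        sq_nonneg (x₀*(c*x₁ + x₂ + c^2*x₃)), sq_nonneg (x₂^2)]
    have hS3sq : (x₀*(c*x₁ + x₂ + c^2*x₃))^2 ≤ 0 := by
      linarith [hle, hf, sq_nonneg (x₁^2 + 2*x₂*x₃ + (2 - 4*c^2)*x₀^2),
        sq_nonneg (x₁*x₂ + x₃^2 + (2 - 2*c)*x₀^2), sq_nonneg (x₂^2)]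
    have hx24 : (x₂^2)^2 ≤ 0 := by
      linarith [hle, hf, sq_nonneg (x₁^2 + 2*x₂*x₃ + (2 - 4*c^2)*x₀^2),
        sq_nonneg (x₁*x₂ + x₃^2 + (2 - 2*c)*x₀^2),
        sq_nonneg (x₀*(c*x₁ + x₂ + c^2*x₃))]
    have hS1 : x₁^2 + 2*x₂*x₃ + (2 - 4*c^2)*x₀^2 = 0 :=
      (pow_eq_zero_iff (by norm_num : (2:ℕ) ≠ 0)).mp
        (le_antisymm hS1sq (sq_nonneg _))
    have hS2 : x₁*x₂ + x₃^2 + (2 - 2*c)*x₀^2 = 0 :=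
      (pow_eq_zero_iff (by norm_num : (2:ℕ) ≠ 0)).mp
        (le_antisymm hS2sq (sq_nonneg _))
    have hS3 : x₀*(c*x₁ + x₂ + c^2*x₃) = 0 :=
      (pow_eq_zero_iff (by norm_num : (2:ℕ) ≠ 0)).mp
        (le_antisymm hS3sq (sq_nonneg _))
    have hx2 : x₂ = 0 := by
      have h2 : x₂^2 = 0 :=
        (pow_eq_zero_iff (by norm_num : (2:ℕ) ≠ 0)).mp
          (le_antisymm hx24 (sq_nonneg _))
      exact (pow_eq_zero_iff (by norm_num : (2:ℕ) ≠ 0)).mp h2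
    rcases mul_eq_zero.mp hS3 with hx0 | hS3'
    · -- x₀ = 0
      have hx1sq : x₁^2 = 0 := by
        linear_combination hS1 - 2*x₃*hx2 + (4*c^2 - 2)*x₀*hx0
      have hx3sq : x₃^2 = 0 := by
        linear_combination hS2 - x₁*hx2 + (2*c - 2)*x₀*hx0
      exact h ⟨hx0, (pow_eq_zero_iff (by norm_num : (2:ℕ) ≠ 0)).mp hx1sq, hx2,
        (pow_eq_zero_iff (by norm_num : (2:ℕ) ≠ 0)).mp hx3sq, rfl, rfl, rfl, rfl⟩
    · -- c*x₁ + x₂ + c²*x₃ = 0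
      have hx1' : x₁ + c*x₃ = 0 := by
        have hm : c * (x₁ + c*x₃) = 0 := by linear_combination hS3' - hx2
        rcases mul_eq_zero.mp hm with hbad | hgood
        · exact absurd hbad (ne_of_gt hcpos)
        · exact hgood
      have h6 : (6*c^2 - 6) * x₀^2 = 0 := by
        linear_combination (-1)*hS1 + c^2*hS2 + (x₁ - c*x₃)*hx1'
          + (2*x₃ - c^2*x₁)*hx2 + 2*x₀^2*hc
      have hx0 : x₀ = 0 := by
        have hpos : 0 < 6*c^2 - 6 := by nlinarith
        have : x₀^2 = 0 := by
          rcases mul_eq_zero.mp h6 with hbad | hgood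
          · exact absurd hbad (ne_of_gt hpos)
          · exact hgood
        exact (pow_eq_zero_iff (by norm_num : (2:ℕ) ≠ 0)).mp this
      have hx3sq : x₃^2 = 0 := by
        linear_combination hS2 - x₁*hx2 + (2*c - 2)*x₀*hx0
      have hx3 : x₃ = 0 := (pow_eq_zero_iff (by norm_num : (2:ℕ) ≠ 0)).mp hx3sq
      have hx1 : x₁ = 0 := by linear_combination hx1' - c*hx3
      exact h ⟨hx0, hx1, hx2, hx3, rfl, rfl, rfl, rfl⟩
  · -- some y is nonzero: g > 0 and f ≥ 0
    have hfge : 0 ≤ (40*x₀^4 + 8*x₀^2*x₁^2 + 32*x₀^2*x₁*x₂ + 64*x₀^2*x₁*x₃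
        + 16*x₀^2*x₂^2 + 16*x₀^2*x₂*x₃ + 32*x₀^2*x₃^2 + 2*x₁^4 + 8*x₁^2*x₂^2
        + 8*x₁^2*x₂*x₃ + 16*x₁*x₂*x₃^2 + 8*x₂^2*x₃^2 + 8*x₃^4) := by
      linarith [hf, sq_nonneg (x₁^2 + 2*x₂*x₃ + (2 - 4*c^2)*x₀^2),
        sq_nonneg (x₁*x₂ + x₃^2 + (2 - 2*c)*x₀^2),
        sq_nonneg (x₀*(c*x₁ + x₂ + c^2*x₃))]
    have hg : 0 < (y₀^2 - y₃^2)^2 + (y₁^2 - y₃^2)^2 + (y₂^2 - y₃^2)^2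
          + (-y₀^2 - y₀*y₁ - y₀*y₂ + y₀*y₃ - y₁*y₂ + y₁*y₃ + y₂*y₃)^2 := by
      by_contra hgl
      rw [not_lt] at hgl
      have hq1 : y₀^2 - y₃^2 = 0 := by
        have : (y₀^2 - y₃^2)^2 ≤ 0 := by
          linarith [hgl, sq_nonneg (y₁^2 - y₃^2), sq_nonneg (y₂^2 - y₃^2),
            sq_nonneg (-y₀^2 - y₀*y₁ - y₀*y₂ + y₀*y₃ - y₁*y₂ + y₁*y₃ + y₂*y₃)]
        exact (pow_eq_zero_iff (by norm_num : (2:ℕ) ≠ 0)).mp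
          (le_antisymm this (sq_nonneg _))
      have hq2 : y₁^2 - y₃^2 = 0 := by
        have : (y₁^2 - y₃^2)^2 ≤ 0 := by
          linarith [hgl, sq_nonneg (y₀^2 - y₃^2), sq_nonneg (y₂^2 - y₃^2),
            sq_nonneg (-y₀^2 - y₀*y₁ - y₀*y₂ + y₀*y₃ - y₁*y₂ + y₁*y₃ + y₂*y₃)]
        exact (pow_eq_zero_iff (by norm_num : (2:ℕ) ≠ 0)).mp
          (le_antisymm this (sq_nonneg _))
      have hq3 : y₂^2 - y₃^2 = 0 := by
        have : (y₂^2 - y₃^2)^2 ≤ 0 := by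
          linarith [hgl, sq_nonneg (y₀^2 - y₃^2), sq_nonneg (y₁^2 - y₃^2),
            sq_nonneg (-y₀^2 - y₀*y₁ - y₀*y₂ + y₀*y₃ - y₁*y₂ + y₁*y₃ + y₂*y₃)]
        exact (pow_eq_zero_iff (by norm_num : (2:ℕ) ≠ 0)).mp
          (le_antisymm this (sq_nonneg _))
      have hq4 : -y₀^2 - y₀*y₁ - y₀*y₂ + y₀*y₃ - y₁*y₂ + y₁*y₃ + y₂*y₃ = 0 := by
        have : (-y₀^2 - y₀*y₁ - y₀*y₂ + y₀*y₃ - y₁*y₂ + y₁*y₃ + y₂*y₃)^2 ≤ 0 := by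
          linarith [hgl, sq_nonneg (y₀^2 - y₃^2), sq_nonneg (y₁^2 - y₃^2),
            sq_nonneg (y₂^2 - y₃^2)]
        exact (pow_eq_zero_iff (by norm_num : (2:ℕ) ≠ 0)).mp
          (le_antisymm this (sq_nonneg _))
      have d0 : y₀ = y₃ ∨ y₀ = -y₃ := by
        have hm : (y₀ - y₃) * (y₀ + y₃) = 0 := by linear_combination hq1
        rcases mul_eq_zero.mp hm with hh | hh
        · left; linarith
        · right; linarith
      have d1 : y₁ = y₃ ∨ y₁ = -y₃ := by
        have hm : (y₁ - y₃) * (y₁ + y₃) = 0 := by linear_combination hq2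
        rcases mul_eq_zero.mp hm with hh | hh
        · left; linarith
        · right; linarith
      have d2 : y₂ = y₃ ∨ y₂ = -y₃ := by
        have hm : (y₂ - y₃) * (y₂ + y₃) = 0 := by linear_combination hq3
        rcases mul_eq_zero.mp hm with hh | hh
        · left; linarith
        · right; linarith
      rcases d0 with e0|e0 <;> rcases d1 with e1|e1 <;> rcases d2 with e2|e2 <;>
        · rw [e0, e1, e2] at hq4
          have h33 : y₃^2 = 0 := by linarith [hq4]
          have hy3 : y₃ = 0 :=
            (pow_eq_zero_iff (by norm_num : (2:ℕ) ≠ 0)).mp h33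
          exact hy ⟨by simp [e0, hy3], by simp [e1, hy3],
            by simp [e2, hy3], hy3⟩
    linarith [hfge, hg, sq_nonneg (x₂^2 - y₂^2)]
end

section
/- The 10×10 symmetric integer matrix Q_y given in Section 3.2 of the paper (with diagonal entries 6 and off-diagonal entries ±1 or ±6 as specified) is positive semidefinite, and its kernel is 4-dimensional, spanned by the coordinate vectors of q₁ = y₀²-y₃², q₂ = y₁²-y₃², q₃ = y₂²-y₃², q₄ = -y₀²-y₀y₁-y₀y₂+y₀y₃-y₁y₂+y₁y₃+y₂y₃ in the monomial basis {y₀², y₀y₁, y₀y₂, y₀y₃, y₁², y₁y₂, y₁y₃, y₂², y₂y₃, y₃²}. -/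
/-!
Write `s = x₀ + x₄ + x₇ + x₉` for the total weight of a coefficient vector on the four squares
`yᵢ²`, and flip the signs of the coefficients of the six mixed monomials to `u₁, …, u₆`
(`T = ∑ uₖ`). The four square rows of `Q_y` coincide, and after the sign flip `Q_y` becomes
the form `6 s² + 2 s T - T² + 7 ∑ uₖ²`, so that
`6 xᵀ Q_y x = (6 s + T)² + 7 (6 ∑ uₖ² - T²)`,
which is nonnegative by Cauchy–Schwarz. The kernel equations read `6 s + T = 0` and
`s + 7 uₖ - T = 0`, so all `uₖ` agree and `s = -uₖ`: three free directions inside the squares and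
one more, `q₄`.
-/

/-- The 10×10 integer matrix Q_y of Section 3.2, as a real matrix. -/
def Qy : Matrix (Fin 10) (Fin 10) ℝ :=
  !![6, -1, -1, 1, 6, -1, 1, 6, 1, 6;
     -1, 6, -1, 1, -1, -1, 1, -1, 1, -1;
     -1, -1, 6, 1, -1, -1, 1, -1, 1, -1;
     1, 1, 1, 6, 1, 1, -1, 1, -1, 1;
     6, -1, -1, 1, 6, -1, 1, 6, 1, 6;
     -1, -1, -1, 1, -1, 6, 1, -1, 1, -1;
     1, 1, 1, -1, 1, 1, 6, 1, -1, 1;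
     6, -1, -1, 1, 6, -1, 1, 6, 1, 6;
     1, 1, 1, -1, 1, 1, -1, 1, 6, 1;
     6, -1, -1, 1, 6, -1, 1, 6, 1, 6]

open Matrix Finset

def squareCoeffSum (x : Fin 10 → ℝ) : ℝ := x 0 + x 4 + x 7 + x 9

/-- The coefficients of `y₀y₁, y₀y₂, y₀y₃, y₁y₂, y₁y₃, y₂y₃`, with signs chosen so that all
off-diagonal entries of `Qy` between mixed monomials become `-1`. -/
def twistedMixedCoeffs (x : Fin 10 → ℝ) : Fin 6 → ℝ := ![-x 1, -x 2, x 3, -x 5, x 6, x 8]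

def squareRow (x : Fin 10 → ℝ) : ℝ := 6 * squareCoeffSum x + ∑ k, twistedMixedCoeffs x k

def mixedRow (x : Fin 10 → ℝ) (k : Fin 6) : ℝ :=
  squareCoeffSum x + 7 * twistedMixedCoeffs x k - ∑ j, twistedMixedCoeffs x j

lemma Qy_mulVec (x : Fin 10 → ℝ) :
    Qy *ᵥ x = ![squareRow x, -mixedRow x 0, -mixedRow x 1, mixedRow x 2, squareRow x,
      -mixedRow x 3, mixedRow x 4, squareRow x, mixedRow x 5, squareRow x] := by
  ext i
  simp only [Qy, mulVec, dotProduct, of_apply, squareRow, mixedRow, squareCoeffSum,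
    twistedMixedCoeffs, Fin.sum_univ_succ, Fin.sum_univ_zero]
  fin_cases i <;>
    simp only [Fin.reduceFinMk, Fin.mk_one, Fin.zero_eta, Fin.isValue, cons_val', cons_val_zero,
      cons_val_fin_one, cons_val_one, Matrix.cons_val, Fin.succ_zero_eq_one, Fin.succ_one_eq_two,
      Fin.reduceSucc] <;>
    ring

lemma Qy_mulVec_eq_zero_iff (x : Fin 10 → ℝ) :
    Qy *ᵥ x = 0 ↔ squareRow x = 0 ∧ ∀ k, mixedRow x k = 0 := by
  simp only [Qy_mulVec, funext_iff, Fin.forall_fin_succ, Fin.isValue, Pi.zero_apply, cons_val_zero,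
    cons_val_succ, cons_val_fin_one, neg_eq_zero, forall_const, Fin.succ_zero_eq_one,
    Fin.succ_one_eq_two, Fin.reduceSucc, IsEmpty.forall_iff, and_true]
  tauto

lemma Qy_isHermitian : Qy.IsHermitian := by
  ext i j
  fin_cases i <;> fin_cases j <;> rfl

lemma dotProduct_Qy_mulVec (x : Fin 10 → ℝ) :
    x ⬝ᵥ Qy *ᵥ x = 6 * squareCoeffSum x ^ 2 + 2 * squareCoeffSum x * ∑ k, twistedMixedCoeffs x k
      - (∑ k, twistedMixedCoeffs x k) ^ 2 + 7 * ∑ k, twistedMixedCoeffs x k ^ 2 := by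
  simp only [Qy_mulVec, dotProduct, squareRow, mixedRow, squareCoeffSum, twistedMixedCoeffs,
    Fin.sum_univ_succ, Fin.sum_univ_zero, Fin.isValue, cons_val_zero, cons_val_one,
    Matrix.cons_val, Fin.succ_zero_eq_one, Fin.succ_one_eq_two, Fin.reduceSucc]
  ring

lemma Qy_posSemidef : Qy.PosSemidef := by
  refine posSemidef_iff_dotProduct_mulVec.mpr ⟨Qy_isHermitian, fun x => ?_⟩
  set s := squareCoeffSum x
  set u := twistedMixedCoeffs x
  have cauchy_schwarz : (∑ k, u k) ^ 2 ≤ 6 * ∑ k, u k ^ 2 := by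
    simpa using sq_sum_le_card_mul_sum_sq (s := univ) (f := u)
  have sum_of_squares :
      6 * (x ⬝ᵥ Qy *ᵥ x) = (6 * s + ∑ k, u k) ^ 2 + 7 * (6 * ∑ k, u k ^ 2 - (∑ k, u k) ^ 2) := by
    rw [dotProduct_Qy_mulVec]
    ring
  rw [star_trivial]
  linarith [sq_nonneg (6 * s + ∑ k, u k)]

def QyKernelBasis : Fin 4 → Fin 10 → ℝ :=
  ![![1, 0, 0, 0, 0, 0, 0, 0, 0, -1],
    ![0, 0, 0, 0, 1, 0, 0, 0, 0, -1],
    ![0, 0, 0, 0, 0, 0, 0, 1, 0, -1],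
    ![-1, -1, -1, 1, 0, -1, 1, 0, 1, 0]]

lemma range_QyKernelBasis : Set.range QyKernelBasis =
    {![1, 0, 0, 0, 0, 0, 0, 0, 0, -1],
      ![0, 0, 0, 0, 1, 0, 0, 0, 0, -1],
      ![0, 0, 0, 0, 0, 0, 0, 1, 0, -1],
      ![-1, -1, -1, 1, 0, -1, 1, 0, 1, 0]} := by
  simp only [QyKernelBasis, range_cons, range_empty, Set.union_empty, Set.singleton_union]

lemma linearIndependent_QyKernelBasis : LinearIndependent ℝ QyKernelBasis := by
  refine Fintype.linearIndependent_iff.mpr fun c hc => ?_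
  have coord (j : Fin 10) := congrFun hc j
  have h0 := coord 0; have h4 := coord 4; have h7 := coord 7; have h8 := coord 8
  simp only [QyKernelBasis, Finset.sum_apply, Pi.smul_apply, smul_eq_mul, Fin.sum_univ_four,
    Fin.isValue, cons_val', cons_val_zero, cons_val_one, cons_val_fin_one, Matrix.cons_val,
    Pi.zero_apply] at h0 h4 h7 h8
  intro i
  fin_cases i <;> simp only [Fin.zero_eta, Fin.mk_one, Fin.reduceFinMk, Fin.isValue] <;> linarith

lemma Qy_mulVec_QyKernelBasis (i : Fin 4) : Qy *ᵥ QyKernelBasis i = 0 := by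
  rw [Qy_mulVec_eq_zero_iff]
  fin_cases i <;>
    simp [Fin.forall_fin_succ, squareRow, mixedRow, squareCoeffSum, twistedMixedCoeffs,
      QyKernelBasis, Fin.sum_univ_succ]
  all_goals norm_num

lemma eq_QyKernelBasis_combination {x : Fin 10 → ℝ} (hx : Qy *ᵥ x = 0) :
    ∑ i, ![x 0 + x 8, x 4, x 7, x 8] i • QyKernelBasis i = x := by
  obtain ⟨hsquare, hmixed⟩ := (Qy_mulVec_eq_zero_iff x).mp hx
  simp only [mixedRow] at hmixed
  have hu (k : Fin 6) : twistedMixedCoeffs x k = x 8 := by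
    have h5 : twistedMixedCoeffs x 5 = x 8 := rfl
    linarith [hmixed k, hmixed 5]
  have hs : squareCoeffSum x = -x 8 := by
    simp only [squareRow, hu, sum_const, card_univ, Fintype.card_fin, nsmul_eq_mul,
      Nat.cast_ofNat] at hsquare
    linarith
  obtain ⟨h1, h2, h3, h5, h6⟩ : -x 1 = x 8 ∧ -x 2 = x 8 ∧ x 3 = x 8 ∧ -x 5 = x 8 ∧ x 6 = x 8 :=
    ⟨hu 0, hu 1, hu 2, hu 3, hu 4⟩
  simp only [squareCoeffSum] at hs
  ext i
  fin_cases i <;>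
    simp only [QyKernelBasis, Finset.sum_apply, Pi.smul_apply, smul_eq_mul, Fin.sum_univ_four,
      Fin.zero_eta, Fin.mk_one, Fin.reduceFinMk, Fin.isValue, cons_val', cons_val_zero,
      cons_val_one, cons_val_fin_one, Matrix.cons_val] <;>
    linarith

lemma ker_Qy_mulVecLin :
    LinearMap.ker Qy.mulVecLin = Submodule.span ℝ (Set.range QyKernelBasis) := by
  refine le_antisymm (fun x hx => ?_) (Submodule.span_le.mpr ?_)
  · exact Submodule.mem_span_range_iff_exists_fun ℝ |>.mpr ⟨_, eq_QyKernelBasis_combination hx⟩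
  · rintro _ ⟨i, rfl⟩
    exact Qy_mulVec_QyKernelBasis i

/-- Q_y is positive semidefinite and its kernel is the 4-dimensional
space spanned by the coordinate vectors of q₁, q₂, q₃, q₄ in the monomial basis
{y₀², y₀y₁, y₀y₂, y₀y₃, y₁², y₁y₂, y₁y₃, y₂², y₂y₃, y₃²}. -/
theorem Qy_posSemidef_and_kernel :
    Qy.PosSemidef ∧
    LinearMap.ker Qy.mulVecLin = Submodule.span ℝ
      ({![1, 0, 0, 0, 0, 0, 0, 0, 0, -1],
        ![0, 0, 0, 0, 1, 0, 0, 0, 0, -1],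
        ![0, 0, 0, 0, 0, 0, 0, 1, 0, -1],
        ![-1, -1, -1, 1, 0, -1, 1, 0, 1, 0]} : Set (Fin 10 → ℝ)) ∧
    Module.finrank ℝ (LinearMap.ker Qy.mulVecLin) = 4 := by
  rw [← range_QyKernelBasis, ker_Qy_mulVecLin]
  exact ⟨Qy_posSemidef, rfl, by simpa using finrank_span_eq_card linearIndependent_QyKernelBasis⟩
end

section
/- Let f ∈ ℚ[x₁,…,xₙ] be a polynomial of degree 2d and suppose f = mᵀAm for some positive definite (invertible positive semidefinite) real symmetric matrix A, where m is the vector of monomials of degree ≤ d. Then f admits a Gram matrix with rational entries; in particular f is a sum of squares of polynomials with rational coefficients. -/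
/-!
The Gram matrices of `f` with respect to `m` form an affine subspace cut out by linear equations
with rational coefficients, one for each coefficient of `f`. An explicit affine retraction onto
this subspace commutes with the cast `ℚ → ℝ` and fixes `A`, so it sends rational approximations
of `A` to rational Gram matrices arbitrarily close to `A`; as positive definiteness is an open
condition, one of them is positive definite. A rational positive semidefinite matrix is
congruent over `ℚ` to a diagonal matrix with nonnegative entries, `B = Qᵀ D Q`, so
`f = ∑ₖ Dₖₖ ((Q m)ₖ)²`, and each `Dₖₖ` is a sum of four rational squares by Lagrange.
-/

open MvPolynomial

open Finset Matrix Filter Topology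

variable {σ ι : Type*} [Fintype ι]

section Gram

variable {R : Type*} [CommSemiring R]

noncomputable def gramPolynomial (m : ι → σ →₀ ℕ) (B : Matrix ι ι R) : MvPolynomial σ R :=
  ∑ i, ∑ j, B i j • (monomial (m i) 1 * monomial (m j) 1)

noncomputable def gramFiber [DecidableEq σ] (m : ι → σ →₀ ℕ) (s : σ →₀ ℕ) : Finset (ι × ι) :=
  {p | m p.1 + m p.2 = s}

variable (m : ι → σ →₀ ℕ)

theorem mem_gramFiber [DecidableEq σ] {s : σ →₀ ℕ} {p : ι × ι} :
    p ∈ gramFiber m s ↔ m p.1 + m p.2 = s := by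
  simp [gramFiber]

theorem sum_gramFiber_swap [DecidableEq σ] {M : Type*} [AddCommMonoid M] (s : σ →₀ ℕ)
    (g : ι → ι → M) : ∑ p ∈ gramFiber m s, g p.2 p.1 = ∑ p ∈ gramFiber m s, g p.1 p.2 :=
  sum_nbij' Prod.swap Prod.swap (by simp [mem_gramFiber, add_comm])
    (by simp [mem_gramFiber, add_comm]) (by simp) (by simp) (by simp)

theorem coeff_gramPolynomial [DecidableEq σ] (B : Matrix ι ι R) (s : σ →₀ ℕ) :
    (gramPolynomial m B).coeff s = ∑ p ∈ gramFiber m s, B p.1 p.2 := by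
  rw [gramFiber, sum_filter, ← univ_product_univ, sum_product]
  simp [gramPolynomial, coeff_sum, monomial_mul, coeff_monomial, mul_ite]

theorem map_gramPolynomial {S : Type*} [CommSemiring S] (φ : R →+* S) (B : Matrix ι ι R) :
    map φ (gramPolynomial m B) = gramPolynomial m (B.map φ) := by
  simp [gramPolynomial, smul_eq_C_mul]

theorem gramPolynomial_eq_dotProduct_mulVec (B : Matrix ι ι R) :
    gramPolynomial m B =
      (fun i ↦ monomial (m i) 1) ⬝ᵥ B.map C *ᵥ fun i ↦ monomial (m i) (1 : R) := by
  simp only [gramPolynomial, dotProduct, mulVec, mul_sum, smul_eq_C_mul, map_apply]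
  exact sum_congr rfl fun i _ ↦ sum_congr rfl fun j _ ↦ by ring

end Gram

section Projection

variable [DecidableEq σ] {K : Type*} [Field K] (m : ι → σ →₀ ℕ)

/-- Symmetrize `C`, then spread the defect of each coefficient of `f` evenly over the entries
contributing to it. -/
noncomputable def gramProjection (f : MvPolynomial σ K) (C : Matrix ι ι K) : Matrix ι ι K :=
  of fun i j ↦ (C i j + C j i) / 2 +
    (f.coeff (m i + m j) - ∑ p ∈ gramFiber m (m i + m j), C p.1 p.2) / #(gramFiber m (m i + m j))

variable {m}

theorem isSymm_gramProjection (f : MvPolynomial σ K) (C : Matrix ι ι K) :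
    (gramProjection m f C).IsSymm :=
  IsSymm.ext fun i j ↦ by simp only [gramProjection, of_apply, add_comm (C i j), add_comm (m i)]

theorem map_gramProjection {L : Type*} [Field L] (φ : K →+* L) (f : MvPolynomial σ K)
    (C : Matrix ι ι K) :
    (gramProjection m f C).map φ = gramProjection m (map φ f) (C.map φ) := by
  ext i j
  simp [gramProjection, map_div₀, map_ofNat, coeff_map]

theorem continuous_gramProjection [TopologicalSpace K] [IsTopologicalRing K]
    (f : MvPolynomial σ K) : Continuous (gramProjection m f) := by
  refine continuous_matrix fun i j ↦ ?_
  simp only [gramProjection, of_apply]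
  fun_prop

variable [CharZero K]

theorem gramPolynomial_gramProjection {f : MvPolynomial σ K} {A : Matrix ι ι K}
    (hf : f = gramPolynomial m A) (C : Matrix ι ι K) :
    gramPolynomial m (gramProjection m f C) = f := by
  ext s
  rw [coeff_gramPolynomial]
  rcases (gramFiber m s).eq_empty_or_nonempty with hs | hs
  · rw [hs, sum_empty, hf, coeff_gramPolynomial, hs, sum_empty]
  have hentry : ∀ p ∈ gramFiber m s, gramProjection m f C p.1 p.2 = (C p.1 p.2 + C p.2 p.1) / 2 +
      (f.coeff s - ∑ q ∈ gramFiber m s, C q.1 q.2) / #(gramFiber m s) :=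
    fun p hp ↦ by simp only [gramProjection, of_apply, (mem_gramFiber m).1 hp]
  have hcard : (#(gramFiber m s) : K) ≠ 0 := Nat.cast_ne_zero.2 hs.card_pos.ne'
  rw [sum_congr rfl hentry, sum_add_distrib, ← sum_div, sum_add_distrib,
    sum_gramFiber_swap m s C, sum_const, nsmul_eq_mul]
  field_simp
  ring

theorem gramProjection_self {f : MvPolynomial σ K} {A : Matrix ι ι K} (hA : A.IsSymm)
    (hf : f = gramPolynomial m A) : gramProjection m f A = A := by
  ext i j
  simp [gramProjection, hA.apply i j, hf, coeff_gramPolynomial]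

end Projection

theorem Matrix.PosDef.eventually_dotProduct_mulVec_pos {A : Matrix ι ι ℝ} (hA : A.PosDef) :
    ∀ᶠ B in 𝓝 A, ∀ x ≠ 0, 0 < x ⬝ᵥ B *ᵥ x := by
  have hcont : Continuous fun z : Matrix ι ι ℝ × (ι → ℝ) ↦ z.2 ⬝ᵥ z.1 *ᵥ z.2 := by fun_prop
  have hsphere : ∀ᶠ B in 𝓝 A, ∀ u ∈ Metric.sphere (0 : ι → ℝ) 1, 0 < u ⬝ᵥ B *ᵥ u := by
    refine (isCompact_sphere 0 1).eventually_forall_of_forall_eventually fun u hu ↦ ?_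
    have hu0 : u ≠ 0 := ne_zero_of_mem_unit_sphere ⟨u, hu⟩
    exact (hcont.tendsto (A, u)).eventually_const_lt (by simpa using hA.dotProduct_mulVec_pos hu0)
  filter_upwards [hsphere] with B hB x hx
  have hxu : x = ‖x‖ • (‖x‖⁻¹ • x) := by simp [smul_smul, norm_ne_zero_iff.2 hx]
  have hu : ‖x‖⁻¹ • x ∈ Metric.sphere (0 : ι → ℝ) 1 := by
    simpa using norm_smul_inv_norm (𝕜 := ℝ) hx
  rw [hxu, mulVec_smul, dotProduct_smul, smul_dotProduct, smul_eq_mul, smul_eq_mul, ← mul_assoc]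
  exact mul_pos (by positivity) (hB _ hu)

omit [Fintype ι] in
theorem Matrix.denseRange_map_ratCast {κ : Type*} :
    DenseRange fun Q : Matrix ι κ ℚ ↦ Q.map ((↑) : ℚ → ℝ) :=
  DenseRange.piMap fun _ ↦ DenseRange.piMap fun _ ↦ Rat.denseRange_cast

theorem exists_rat_posDef_gram_of_posDef_gram (m : ι → σ →₀ ℕ) {f : MvPolynomial σ ℚ}
    {A : Matrix ι ι ℝ} (hA : A.PosDef) (hf : map (algebraMap ℚ ℝ) f = gramPolynomial m A) :
    ∃ B : Matrix ι ι ℚ, B.IsSymm ∧ (B.map ((↑) : ℚ → ℝ)).PosDef ∧ f = gramPolynomial m B := by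
  classical
  have hAsymm : A.IsSymm := isHermitian_iff_isSymm.1 hA.isHermitian
  have hcast (C : Matrix ι ι ℚ) : (gramProjection m f C).map ((↑) : ℚ → ℝ) =
      gramProjection m (map (algebraMap ℚ ℝ) f) (C.map (↑)) :=
    map_gramProjection (Rat.castHom ℝ) f C
  have hnear : ∀ᶠ C in 𝓝 A, ∀ x ≠ 0,
      0 < x ⬝ᵥ gramProjection m (map (algebraMap ℚ ℝ) f) C *ᵥ x :=
    ((continuous_gramProjection _).tendsto' A A (gramProjection_self hAsymm hf)).eventually
      hA.eventually_dotProduct_mulVec_pos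
  obtain ⟨_, ⟨Q, rfl⟩, hQ⟩ := denseRange_map_ratCast.inter_nhds_nonempty hnear
  refine ⟨gramProjection m f Q, isSymm_gramProjection f Q,
    .of_dotProduct_mulVec_pos ?_ fun x hx ↦ ?_, ?_⟩
  · exact isHermitian_iff_isSymm.2 ((isSymm_gramProjection f Q).map _)
  · simpa [hcast] using hQ x hx
  · refine map_injective _ (algebraMap ℚ ℝ).injective ?_
    rw [map_gramPolynomial, map_gramProjection, gramPolynomial_gramProjection hf]

theorem Matrix.IsSymm.exists_eq_transpose_mul_diagonal_mul {K : Type*} [Field K]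
    [Invertible (2 : K)] {B : Matrix ι ι K} (hB : B.IsSymm) :
    ∃ (r : ℕ) (Q : Matrix (Fin r) ι K) (v : Fin r → ι → K),
      B = Qᵀ * diagonal (fun k ↦ v k ⬝ᵥ B *ᵥ v k) * Q := by
  classical
  obtain ⟨w, hw⟩ := LinearMap.BilinForm.exists_orthogonal_basis
    (LinearMap.BilinForm.isSymm_iff.1 (isSymm_toBilin'_iff_isSymm.2 hB))
  refine ⟨_, w.toMatrix (Pi.basisFun K ι), w, ?_⟩
  have hdiag : LinearMap.BilinForm.toMatrix w B.toBilin' = diagonal fun k ↦ w k ⬝ᵥ B *ᵥ w k := by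
    ext k l
    rcases eq_or_ne k l with rfl | hkl
    · simp [LinearMap.BilinForm.toMatrix_apply, toBilin'_apply']
    · simp [LinearMap.BilinForm.toMatrix_apply, hw hkl, hkl]
  rw [← hdiag, LinearMap.BilinForm.toMatrix_mul_basis_toMatrix,
    LinearMap.BilinForm.toMatrix_basisFun, LinearMap.BilinForm.toMatrix'_toBilin']

theorem dotProduct_mulVec_transpose_mul_diagonal_mul {R κ : Type*} [CommSemiring R] [Fintype κ]
    [DecidableEq κ] (Q : Matrix κ ι R) (d : κ → R) (x : ι → R) :
    x ⬝ᵥ (Qᵀ * diagonal d * Q) *ᵥ x = ∑ k, d k * (Q *ᵥ x) k ^ 2 := by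
  rw [← mulVec_mulVec, ← mulVec_mulVec, dotProduct_mulVec, vecMul_transpose]
  simp only [dotProduct, mulVec_diagonal, sq]
  exact sum_congr rfl fun k _ ↦ by ring

theorem Rat.exists_sum_four_sq_of_nonneg {q : ℚ} (hq : 0 ≤ q) :
    ∃ a : Fin 4 → ℚ, q = ∑ t, a t ^ 2 := by
  obtain ⟨a, b, c, d, h⟩ := Nat.sum_four_squares (q.num.toNat * q.den)
  refine ⟨![a / q.den, b / q.den, c / q.den, d / q.den], ?_⟩
  have hnum : ((q.num.toNat : ℕ) : ℚ) = q * q.den := by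
    rw [Rat.mul_den_eq_num, ← Int.cast_natCast, Int.toNat_of_nonneg (Rat.num_nonneg.2 hq)]
  have hsq : (a ^ 2 + b ^ 2 + c ^ 2 + d ^ 2 : ℚ) = q * q.den * q.den := by
    rw [← hnum]; exact_mod_cast h
  have hden : (q.den : ℚ) ≠ 0 := by positivity
  simp only [Fin.sum_univ_four, Matrix.cons_val, div_pow]
  field_simp
  linear_combination -hsq

theorem exists_sum_sq_of_nonneg_gram (m : ι → σ →₀ ℕ) {f : MvPolynomial σ ℚ} {B : Matrix ι ι ℚ}
    (hB : B.IsSymm) (hpos : ∀ x, 0 ≤ x ⬝ᵥ B *ᵥ x) (hf : f = gramPolynomial m B) :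
    ∃ (k : ℕ) (p : Fin k → MvPolynomial σ ℚ), f = ∑ i, p i ^ 2 := by
  classical
  obtain ⟨r, Q, v, hBQ⟩ := hB.exists_eq_transpose_mul_diagonal_mul
  choose a ha using fun k ↦ Rat.exists_sum_four_sq_of_nonneg (hpos (v k))
  set y := Q.map C *ᵥ fun i ↦ monomial (m i) (1 : ℚ)
  have hsum : f = ∑ kt : Fin r × Fin 4, (C (a kt.1 kt.2) * y kt.1) ^ 2 := by
    rw [hf, gramPolynomial_eq_dotProduct_mulVec, hBQ, Matrix.map_mul, Matrix.map_mul,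
      transpose_map, diagonal_map (map_zero C), dotProduct_mulVec_transpose_mul_diagonal_mul,
      Fintype.sum_prod_type]
    refine sum_congr rfl fun k _ ↦ ?_
    simp [y, ha k, mul_pow, sum_mul]
  exact ⟨_, _, hsum.trans (Equiv.sum_comp (Fintype.equivFin _).symm _).symm⟩

theorem rational_gram_matrix_of_posdef_gram_general (n : ℕ)
    (f : MvPolynomial (Fin n) ℚ)
    (ι : Type) [Fintype ι]
    (m : ι → (Fin n →₀ ℕ))
    (A : Matrix ι ι ℝ) (hA : A.PosDef)
    (hGram : MvPolynomial.map (algebraMap ℚ ℝ) f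
      = ∑ i, ∑ j, A i j • (monomial (m i) (1 : ℝ) * monomial (m j) (1 : ℝ))) :
    (∃ B : Matrix ι ι ℚ, B.IsSymm ∧ (B.map ((↑) : ℚ → ℝ)).PosSemidef ∧
      f = ∑ i, ∑ j, B i j • (monomial (m i) (1 : ℚ) * monomial (m j) (1 : ℚ)))
    ∧ ∃ (k : ℕ) (p : Fin k → MvPolynomial (Fin n) ℚ), f = ∑ i, (p i) ^ 2 := by
  obtain ⟨B, hBsymm, hBpos, hfB⟩ := exists_rat_posDef_gram_of_posDef_gram m hA hGram
  have hnonneg (x : ι → ℚ) : 0 ≤ x ⬝ᵥ B *ᵥ x := by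
    have hcast : ((x ⬝ᵥ B *ᵥ x : ℚ) : ℝ) = (↑) ∘ x ⬝ᵥ B.map (↑) *ᵥ (↑) ∘ x := by
      simp [dotProduct, mulVec]
    have hreal := hBpos.posSemidef.dotProduct_mulVec_nonneg ((↑) ∘ x)
    rw [star_trivial, ← hcast] at hreal
    exact_mod_cast hreal
  exact ⟨⟨B, hBsymm, hBpos.posSemidef, hfB⟩, exists_sum_sq_of_nonneg_gram m hBsymm hnonneg hfB⟩

/-- Hillar's theorem as used in the paper: if a rational
polynomial f of degree 2d has a positive definite (hence invertible) real Gram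
matrix with respect to the vector m of all monomials of degree ≤ d, then f has
a rational Gram matrix; in particular f is a sum of squares of polynomials with
rational coefficients. -/
theorem rational_gram_matrix_of_posdef_gram (n d : ℕ)
    (f : MvPolynomial (Fin n) ℚ) (hdeg : f.totalDegree = 2 * d)
    (ι : Type) [Fintype ι] [DecidableEq ι]
    (m : ι → (Fin n →₀ ℕ))
    (hm_inj : Function.Injective m)
    (hm_deg : ∀ i, (m i).sum (fun _ e => e) ≤ d)
    (hm_all : ∀ s : Fin n →₀ ℕ, s.sum (fun _ e => e) ≤ d → ∃ i, m i = s)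
    (A : Matrix ι ι ℝ) (hA : A.PosDef) (hAsym : A.IsSymm)
    (hGram : MvPolynomial.map (algebraMap ℚ ℝ) f
      = ∑ i, ∑ j, A i j • (monomial (m i) (1 : ℝ) * monomial (m j) (1 : ℝ))) :
    (∃ B : Matrix ι ι ℚ, B.IsSymm ∧ (B.map ((↑) : ℚ → ℝ)).PosSemidef ∧
      f = ∑ i, ∑ j, B i j • (monomial (m i) (1 : ℚ) * monomial (m j) (1 : ℚ)))
    ∧ ∃ (k : ℕ) (p : Fin k → MvPolynomial (Fin n) ℚ), f = ∑ i, (p i) ^ 2 :=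
  rational_gram_matrix_of_posdef_gram_general n f ι m A hA hGram
end
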